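/- For N_c ≥ 2, the Hilbert series g(s,t,u) = (1 - s^{N_c(N_c-1)} t^{N_c} u^{N_c}) / ((1 - s^{N_c(N_c-1)/2} t^{N_c})(1 - s^{N_c(N_c-1)/2} u^{N_c}) ∏_{k=2}^{N_c}(1-s^k) ∏_{l=0}^{N_c-1}(1 - s^l t u)) satisfies g(1/s, 1/t, 1/u) = s^{N_c^2 - 1} (tu)^{N_c} g(s,t,u). -/

import Mathlib

open Finset

private lemma one_sub_inv' {K : Type*} [Field K] (x : K) (hx : x ≠ 0) :
    1 - x⁻¹ = -(x⁻¹ * (1 - x)) := by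
  field_simp
  ring

private lemma prod_neg' {K : Type*} [Field K] {α : Type*} (s : Finset α) (f : α → K) :
    ∏ i ∈ s, -f i = (-1) ^ s.card * ∏ i ∈ s, f i := by
  have h : ∀ i ∈ s, -f i = -1 * f i := fun i _ => by ring
  rw [Finset.prod_congr rfl h, Finset.prod_mul_distrib, Finset.prod_const]

private lemma prod_pow_key {K : Type*} [Field K] (s : K) :
    ∀ n, 2 ≤ n → (∏ k ∈ Icc 2 n, s ^ k) * (∏ l ∈ range n, s ^ l) = s ^ (n ^ 2 - 1) := by
  intro n hn
  induction n, hn using Nat.le_induction with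
  | base =>
      norm_num [Finset.prod_range_succ]
      exact (pow_succ s 2).symm
  | succ n hn ih =>
      rw [Finset.prod_Icc_succ_top (by omega), Finset.prod_range_succ]
      have h1 : (n + 1) ^ 2 = n ^ 2 + 2 * n + 1 := by ring
      have h2 : 1 ≤ n ^ 2 := Nat.one_le_pow _ _ (by omega)
      have h3 : (n + 1) ^ 2 - 1 = (n ^ 2 - 1) + (n + 1 + n) := by omega
      rw [h3]
      conv_rhs => rw [pow_add, ← ih]
      ring

/-- For `N_c ≥ 2`, the conjectured Hilbert series of SU(N_c) adjoint SQCD with 1 flavour,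
`g(s,t,u) = (1 - s^{Nc(Nc-1)} t^{Nc} u^{Nc}) /
  ((1 - s^{Nc(Nc-1)/2} t^{Nc})(1 - s^{Nc(Nc-1)/2} u^{Nc}) ∏_{k=2}^{Nc}(1-s^k)
    ∏_{l=0}^{Nc-1}(1 - s^l t u))`,
satisfies `g(1/s,1/t,1/u) = s^{Nc^2-1} (tu)^{Nc} g(s,t,u)`. -/
theorem suNc_hilbert_series_functional_equation {K : Type*} [Field K]
    (Nc : ℕ) (hNc : 2 ≤ Nc)
    (g : K → K → K → K)
    (hg : ∀ x y z : K, g x y z =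
      (1 - x ^ (Nc * (Nc - 1)) * y ^ Nc * z ^ Nc) /
        ((1 - x ^ (Nc * (Nc - 1) / 2) * y ^ Nc) * (1 - x ^ (Nc * (Nc - 1) / 2) * z ^ Nc) *
          (∏ k ∈ Finset.Icc 2 Nc, (1 - x ^ k)) *
          ∏ l ∈ Finset.range Nc, (1 - x ^ l * y * z)))
    (s t u : K) (hs : s ≠ 0) (ht : t ≠ 0) (hu : u ≠ 0)
    (h1 : 1 - s ^ (Nc * (Nc - 1) / 2) * t ^ Nc ≠ 0)
    (h2 : 1 - s ^ (Nc * (Nc - 1) / 2) * u ^ Nc ≠ 0)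
    (h3 : ∀ k ∈ Finset.Icc 2 Nc, 1 - s ^ k ≠ 0)
    (h4 : ∀ l ∈ Finset.range Nc, 1 - s ^ l * t * u ≠ 0) :
    g s⁻¹ t⁻¹ u⁻¹ = s ^ (Nc ^ 2 - 1) * (t * u) ^ Nc * g s t u := by
  obtain ⟨m, hm⟩ : ∃ m, Nc * (Nc - 1) = 2 * m := (Nat.even_mul_pred_self Nc).exists_two_nsmul _
  have hd : Nc * (Nc - 1) / 2 = m := by omega
  -- inverted single factors
  have hNinv : 1 - (s⁻¹) ^ (Nc * (Nc - 1)) * t⁻¹ ^ Nc * u⁻¹ ^ Nc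
      = -(s ^ (2 * m) * t ^ Nc * u ^ Nc)⁻¹ *
          (1 - s ^ (Nc * (Nc - 1)) * t ^ Nc * u ^ Nc) := by
    have hx : (s⁻¹) ^ (Nc * (Nc - 1)) * t⁻¹ ^ Nc * u⁻¹ ^ Nc
        = (s ^ (Nc * (Nc - 1)) * t ^ Nc * u ^ Nc)⁻¹ := by
      rw [inv_pow, inv_pow, inv_pow, mul_inv, mul_inv]
    rw [hx, one_sub_inv' _ (mul_ne_zero (mul_ne_zero (pow_ne_zero _ hs) (pow_ne_zero _ ht))
      (pow_ne_zero _ hu)), hm]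
    ring
  have hAinv : 1 - (s⁻¹) ^ (Nc * (Nc - 1) / 2) * t⁻¹ ^ Nc
      = -(s ^ m * t ^ Nc)⁻¹ * (1 - s ^ (Nc * (Nc - 1) / 2) * t ^ Nc) := by
    have hx : (s⁻¹) ^ (Nc * (Nc - 1) / 2) * t⁻¹ ^ Nc
        = (s ^ (Nc * (Nc - 1) / 2) * t ^ Nc)⁻¹ := by
      rw [inv_pow, inv_pow, mul_inv]
    rw [hx, one_sub_inv' _ (mul_ne_zero (pow_ne_zero _ hs) (pow_ne_zero _ ht)), hd]
    ring
  have hBinv : 1 - (s⁻¹) ^ (Nc * (Nc - 1) / 2) * u⁻¹ ^ Nc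
      = -(s ^ m * u ^ Nc)⁻¹ * (1 - s ^ (Nc * (Nc - 1) / 2) * u ^ Nc) := by
    have hx : (s⁻¹) ^ (Nc * (Nc - 1) / 2) * u⁻¹ ^ Nc
        = (s ^ (Nc * (Nc - 1) / 2) * u ^ Nc)⁻¹ := by
      rw [inv_pow, inv_pow, mul_inv]
    rw [hx, one_sub_inv' _ (mul_ne_zero (pow_ne_zero _ hs) (pow_ne_zero _ hu)), hd]
    ring
  -- inverted products
  have hPinv : (∏ k ∈ Icc 2 Nc, (1 - (s⁻¹) ^ k))
      = ((-1) ^ (Nc - 1) * (∏ k ∈ Icc 2 Nc, s ^ k)⁻¹) * ∏ k ∈ Icc 2 Nc, (1 - s ^ k) := by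
    have step : ∀ k ∈ Icc 2 Nc, (1 - (s⁻¹) ^ k) = -((s ^ k)⁻¹ * (1 - s ^ k)) := by
      intro k _
      rw [inv_pow]
      exact one_sub_inv' _ (pow_ne_zero _ hs)
    rw [Finset.prod_congr rfl step, prod_neg', Finset.prod_mul_distrib,
      Finset.prod_inv_distrib, Nat.card_Icc]
    have hc : Nc + 1 - 2 = Nc - 1 := by omega
    rw [hc, mul_assoc]
  have hQinv : (∏ l ∈ range Nc, (1 - (s⁻¹) ^ l * t⁻¹ * u⁻¹))
      = ((-1) ^ Nc * ((∏ l ∈ range Nc, s ^ l) * (t * u) ^ Nc)⁻¹) *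
          ∏ l ∈ range Nc, (1 - s ^ l * t * u) := by
    have step : ∀ l ∈ range Nc, (1 - (s⁻¹) ^ l * t⁻¹ * u⁻¹)
        = -((s ^ l * t * u)⁻¹ * (1 - s ^ l * t * u)) := by
      intro l _
      have hx : (s⁻¹) ^ l * t⁻¹ * u⁻¹ = (s ^ l * t * u)⁻¹ := by
        rw [inv_pow, mul_inv, mul_inv]
      rw [hx]
      exact one_sub_inv' _ (mul_ne_zero (mul_ne_zero (pow_ne_zero _ hs) ht) hu)
    have hsplit : ∏ l ∈ range Nc, (s ^ l * t * u)
        = (∏ l ∈ range Nc, s ^ l) * (t * u) ^ Nc := by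
      rw [Finset.prod_mul_distrib, Finset.prod_mul_distrib, Finset.prod_const,
        Finset.prod_const, Finset.card_range, mul_assoc, ← mul_pow]
    rw [Finset.prod_congr rfl step, prod_neg', Finset.prod_mul_distrib,
      Finset.prod_inv_distrib, hsplit, Finset.card_range]
    ring
  have hkey : (∏ k ∈ Icc 2 Nc, s ^ k) * (∏ l ∈ range Nc, s ^ l) = s ^ (Nc ^ 2 - 1) :=
    prod_pow_key s Nc hNc
  have hSPne : (∏ k ∈ Icc 2 Nc, s ^ k) ≠ 0 :=
    Finset.prod_ne_zero_iff.mpr fun k _ => pow_ne_zero _ hs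
  have hSQne : (∏ l ∈ range Nc, s ^ l) ≠ 0 :=
    Finset.prod_ne_zero_iff.mpr fun l _ => pow_ne_zero _ hs
  rw [hg, hg, hNinv, hAinv, hBinv, hPinv, hQinv]
  -- separate the coefficient part from the structural part
  have hre : (-(s ^ m * t ^ Nc)⁻¹ * (1 - s ^ (Nc * (Nc - 1) / 2) * t ^ Nc)) *
        (-(s ^ m * u ^ Nc)⁻¹ * (1 - s ^ (Nc * (Nc - 1) / 2) * u ^ Nc)) *
        (((-1) ^ (Nc - 1) * (∏ k ∈ Icc 2 Nc, s ^ k)⁻¹) * ∏ k ∈ Icc 2 Nc, (1 - s ^ k)) *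
        (((-1) ^ Nc * ((∏ l ∈ range Nc, s ^ l) * (t * u) ^ Nc)⁻¹) *
          ∏ l ∈ range Nc, (1 - s ^ l * t * u))
      = (-(s ^ m * t ^ Nc)⁻¹ * -(s ^ m * u ^ Nc)⁻¹ * ((-1) ^ (Nc - 1) *
          (∏ k ∈ Icc 2 Nc, s ^ k)⁻¹) * ((-1) ^ Nc *
          ((∏ l ∈ range Nc, s ^ l) * (t * u) ^ Nc)⁻¹)) *
        ((1 - s ^ (Nc * (Nc - 1) / 2) * t ^ Nc) * (1 - s ^ (Nc * (Nc - 1) / 2) * u ^ Nc) *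
          (∏ k ∈ Icc 2 Nc, (1 - s ^ k)) * ∏ l ∈ range Nc, (1 - s ^ l * t * u)) := by
    ring
  rw [hre, mul_div_mul_comm]
  -- the coefficient identity
  have hco : (-(s ^ (2 * m) * t ^ Nc * u ^ Nc)⁻¹) /
      (-(s ^ m * t ^ Nc)⁻¹ * -(s ^ m * u ^ Nc)⁻¹ * ((-1) ^ (Nc - 1) *
        (∏ k ∈ Icc 2 Nc, s ^ k)⁻¹) * ((-1) ^ Nc *
        ((∏ l ∈ range Nc, s ^ l) * (t * u) ^ Nc)⁻¹))
      = s ^ (Nc ^ 2 - 1) * (t * u) ^ Nc := by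
    rw [← hkey]
    rcases Nat.even_or_odd Nc with hpar | hpar
    · have e1 : ((-1 : K)) ^ Nc = 1 := hpar.neg_one_pow
      have e2 : ((-1 : K)) ^ (Nc - 1) = -1 :=
        (Nat.Even.sub_odd (by omega) hpar odd_one).neg_one_pow
      rw [e1, e2]
      field_simp
      ring
    · have e1 : ((-1 : K)) ^ Nc = -1 := hpar.neg_one_pow
      have e2 : ((-1 : K)) ^ (Nc - 1) = 1 := (Nat.Odd.sub_odd hpar odd_one).neg_one_pow
      rw [e1, e2]
      field_simp
      ring
  rw [hco, mul_assoc]
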